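/- arXiv:1401.6461 — 3 statements merged into one kernel-verified Lean document; each statement's English description precedes it below -/
import Mathlib

section
/- Let F(x, y) be a polynomial with rational coefficients in two variables of total degree d. Then there exist polynomials K_0, K_1, ..., K_{⌊(d+1)/2⌋} with rational coefficients, each of degree at most d + 1, such that for every integer n ≥ d + 2 one has ∑_{j+k=n, j,k≥1} F(j, k) * ζ(2j) * ζ(2k) = ∑_{k=0}^{⌊(d+1)/2⌋} K_k(n) * ζ(2k) * ζ(2n-2k). -/
/-!
Write `q k = ζ(2k) / π^(2k) ∈ ℚ` (`zetaRat`, with `q 0 = -1/2`), `G = ∑_{k ≥ 1} q k X^k`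
(`zetaTail`) and `θ = X d/dX`.
The left-hand side is `π^(2n)` times the `n`-th coefficient of `∑_m F_m θ^(m₀) G · θ^(m₁) G`.
Euler's convolution formula for the even Bernoulli numbers says that `G` satisfies the Riccati
equation `θ G = G² - G/2 + X/4`. Giving `X` weight 2 and `G` and `θ` weight 1, this lets one
rewrite every power `G^j`, and hence every product `θ^a G · θ^b G`, as a combination of the
series `X^c θ^i G` and `X^m` of weight at most `a + b + 2`. For `n > c` the `n`-th coefficient
of `X^c θ^i G` is `(n - c)^i q (n - c) = K(n) q c q (n - c)` with `deg K = i`, while the `X^m`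
do not contribute.
-/

open PowerSeries Finset
open scoped Nat

namespace ZetaProductSums

noncomputable def eulerOp (R : Type*) [CommSemiring R] : Derivation R R⟦X⟧ R⟦X⟧ :=
  (X : R⟦X⟧) • derivative R

local notation "θ" => eulerOp _

section EulerOperator

variable {R : Type*} [CommSemiring R]

theorem coeff_eulerOp (f : R⟦X⟧) (n : ℕ) : coeff n (θ f) = n * coeff n f := by
  rcases n with _ | n
  · simp [eulerOp]
  · simp [eulerOp, coeff_succ_X_mul, coeff_derivative, mul_comm]

theorem coeff_iterate_eulerOp (f : R⟦X⟧) (i n : ℕ) :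
    coeff n (θ^[i] f) = n ^ i * coeff n f := by
  induction i with
  | zero => simp
  | succ i ih => rw [Function.iterate_succ_apply', coeff_eulerOp, ih, pow_succ', mul_assoc]

theorem eulerOp_X_pow (m : ℕ) : θ (X ^ m : R⟦X⟧) = m • X ^ m := by
  ext n
  rw [coeff_eulerOp, map_nsmul, coeff_X_pow, nsmul_eq_mul]
  split_ifs with h <;> simp [h]

theorem eulerOp_X : θ (X : R⟦X⟧) = X := by simpa using eulerOp_X_pow (R := R) 1

theorem eulerOp_C (a : R) : θ (C a) = 0 := by
  ext n
  rw [coeff_eulerOp, coeff_C]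
  split_ifs with h <;> simp [h]

noncomputable def eulerOpProd (F : MvPolynomial (Fin 2) R) (f g : R⟦X⟧) : R⟦X⟧ :=
  ∑ m ∈ F.support, MvPolynomial.coeff m F • (θ^[m 0] f * θ^[m 1] g)

theorem coeff_eulerOpProd (F : MvPolynomial (Fin 2) R) (f g : R⟦X⟧) (n : ℕ) :
    coeff n (eulerOpProd F f g) = ∑ p ∈ antidiagonal n,
      MvPolynomial.eval ![(p.1 : R), (p.2 : R)] F * (coeff p.1 f * coeff p.2 g) := by
  simp only [eulerOpProd, map_sum, coeff_smul, coeff_mul, coeff_iterate_eulerOp,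
    MvPolynomial.eval_eq', Fin.prod_univ_two, Matrix.cons_val_zero, Matrix.cons_val_one,
    mul_sum, sum_mul, smul_eq_mul]
  rw [sum_comm]
  exact sum_congr rfl fun _ _ => sum_congr rfl fun _ _ => by ring

theorem C_mul_mem {p : Submodule R R⟦X⟧} (a : R) {f : R⟦X⟧} (hf : f ∈ p) : C a * f ∈ p := by
  simpa [smul_eq_C_mul] using p.smul_mem a hf

end EulerOperator

theorem sum_antidiagonal_two_mul {M : Type*} [AddCommMonoid M] (f : ℕ → ℕ → M) (n : ℕ)
    (hf : ∀ i j, i + j = 2 * n → Odd i → f i j = 0) :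
    ∑ p ∈ antidiagonal (2 * n), f p.1 p.2 = ∑ p ∈ antidiagonal n, f (2 * p.1) (2 * p.2) := by
  classical
  have hinj : Set.InjOn (fun p : ℕ × ℕ => (2 * p.1, 2 * p.2)) (antidiagonal n) := by
    intro p _ q _ h
    simp only [Prod.mk.injEq] at h
    ext <;> omega
  rw [← sum_image (f := fun p => f p.1 p.2) hinj]
  refine (sum_subset (fun p hp => ?_)
    fun p hp hp' => hf _ _ (HasAntidiagonal.mem_antidiagonal.1 hp) ?_).symm
  · obtain ⟨q, hq, rfl⟩ := mem_image.1 hp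
    rw [HasAntidiagonal.mem_antidiagonal] at hq ⊢
    omega
  · contrapose! hp'
    obtain ⟨a, ha⟩ := Nat.not_odd_iff_even.1 hp'
    rw [HasAntidiagonal.mem_antidiagonal] at hp
    refine mem_image.2 ⟨(a, n - a), HasAntidiagonal.mem_antidiagonal.2 (by simp; omega), ?_⟩
    ext <;> simp <;> omega

theorem sum_antidiagonal_eq_sum_Icc {M : Type*} [AddCommMonoid M] {n : ℕ} (f : ℕ → ℕ → M)
    (h₀ : f 0 n = 0) (hn : f n 0 = 0) :
    ∑ p ∈ antidiagonal n, f p.1 p.2 = ∑ j ∈ Icc 1 (n - 1), f j (n - j) := by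
  rw [Nat.sum_antidiagonal_eq_sum_range_succ f]
  refine (sum_subset (fun j hj => ?_) fun j hj hj' => ?_).symm
  · rw [mem_Icc] at hj
    exact mem_range.2 (by omega)
  · rw [mem_range, mem_Icc] at *
    obtain rfl | rfl : j = 0 ∨ j = n := by omega
    · exact h₀
    · rwa [Nat.sub_self]

theorem eulerOp_exp : eulerOp ℚ (exp ℚ) = X * exp ℚ := by
  ext (_ | n)
  · simp [coeff_eulerOp]
  · rw [coeff_eulerOp, coeff_succ_X_mul, coeff_exp, coeff_exp, Nat.factorial_succ]
    simp only [Algebra.algebraMap_self_apply]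
    push_cast
    field_simp

theorem eulerOp_bernoulliPowerSeries :
    θ (bernoulliPowerSeries ℚ) = bernoulliPowerSeries ℚ - bernoulliPowerSeries ℚ ^ 2
      - X * bernoulliPowerSeries ℚ := by
  set B := bernoulliPowerSeries ℚ
  have h1 : B * (exp ℚ - 1) = X := bernoulliPowerSeries_mul_exp_sub_one ℚ
  have h2 : B * (X * exp ℚ) + (exp ℚ - 1) * θ B = X := by
    simpa [Derivation.leibniz, eulerOp_exp, eulerOp_X] using congrArg θ h1
  refine mul_left_cancel₀ (X_ne_zero (R := ℚ)) ?_
  linear_combination B * h2 - (θ B + X * B) * h1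

/-- `t coth (t / 2) = 2 t / (e^t - 1) + t`, an even function. -/
noncomputable def cothSeries : ℚ⟦X⟧ := bernoulliPowerSeries ℚ + bernoulliPowerSeries ℚ + X

theorem eulerOp_cothSeries :
    θ cothSeries + θ cothSeries = cothSeries + cothSeries - cothSeries ^ 2 + X ^ 2 := by
  rw [cothSeries, map_add, map_add, eulerOp_X, eulerOp_bernoulliPowerSeries]
  ring

theorem coeff_cothSeries (m : ℕ) :
    coeff m cothSeries = if Odd m then 0 else 2 * (bernoulli m / m !) := by
  rw [cothSeries, map_add, map_add, coeff_X, bernoulliPowerSeries, coeff_mk,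
    Algebra.algebraMap_self_apply]
  split_ifs with h1 h2 h2
  · subst h1; norm_num [bernoulli_one]
  · exact absurd (h1 ▸ odd_one) h2
  · simp [bernoulli_eq_zero_of_odd h2 (by have := h2.pos; omega)]
  · simp [two_mul]

theorem sum_antidiagonal_bernoulli_two_mul (n : ℕ) :
    ∑ p ∈ antidiagonal n, bernoulli (2 * p.1) / (2 * p.1)! * (bernoulli (2 * p.2) / (2 * p.2)!)
      = (1 - 2 * n) * (bernoulli (2 * n) / (2 * n)!) + if n = 1 then 1 / 4 else 0 := by
  have hodd : ∀ m, Odd m → coeff m cothSeries = 0 := fun m hm => by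
    rw [coeff_cothSeries, if_pos hm]
  have heven : ∀ m, coeff (2 * m) cothSeries = 2 * (bernoulli (2 * m) / (2 * m)!) := fun m => by
    rw [coeff_cothSeries, if_neg (Nat.not_odd_iff_even.2 (even_two_mul m))]
  have h := congrArg (coeff (2 * n)) eulerOp_cothSeries
  rw [map_add, coeff_eulerOp, map_add, map_sub, map_add, sq, coeff_mul,
    sum_antidiagonal_two_mul (fun i j => coeff i cothSeries * coeff j cothSeries) n
      (fun i j _ hi => by rw [hodd i hi, zero_mul]), coeff_X_pow] at h
  simp only [heven, show 2 * n = 2 ↔ n = 1 by omega] at h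
  have h4 : ∑ p ∈ antidiagonal n, 2 * (bernoulli (2 * p.1) / (2 * p.1)!)
      * (2 * (bernoulli (2 * p.2) / (2 * p.2)!)) = 4 * ∑ p ∈ antidiagonal n,
        bernoulli (2 * p.1) / (2 * p.1)! * (bernoulli (2 * p.2) / (2 * p.2)!) := by
    rw [mul_sum]
    exact sum_congr rfl fun _ _ => by ring
  push_cast at h
  split_ifs at h ⊢ <;> linear_combination h / 4 - h4 / 4

noncomputable def zetaRat (k : ℕ) : ℚ :=
  (-1) ^ (k + 1) * 2 ^ (2 * k - 1 : ℤ) * (bernoulli (2 * k) / (2 * k)!)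

theorem riemannZeta_two_mul_nat_eq_zetaRat (k : ℕ) :
    riemannZeta ((2 * k : ℕ) : ℂ) = zetaRat k * (Real.pi : ℂ) ^ (2 * k) := by
  rw [Nat.cast_mul, Nat.cast_ofNat, riemannZeta_two_mul_nat', zetaRat]
  push_cast
  ring

theorem zetaRat_ne_zero (k : ℕ) : zetaRat k ≠ 0 := by
  have hζ : riemannZeta ((2 * k : ℕ) : ℂ) ≠ 0 := by
    rcases Nat.eq_zero_or_pos k with rfl | hk
    · norm_num [riemannZeta_zero]
    · exact riemannZeta_ne_zero_of_one_lt_re (by norm_cast; omega)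
  rw [riemannZeta_two_mul_nat_eq_zetaRat] at hζ
  exact_mod_cast left_ne_zero_of_mul hζ

theorem zetaRat_mul_zetaRat (a b : ℕ) :
    zetaRat a * zetaRat b = (-1) ^ (a + b) * 2 ^ (2 * ((a + b : ℕ) : ℤ) - 2)
      * (bernoulli (2 * a) / (2 * a)! * (bernoulli (2 * b) / (2 * b)!)) := by
  rw [zetaRat, zetaRat,
    show 2 * ((a + b : ℕ) : ℤ) - 2 = (2 * a - 1) + (2 * b - 1) by push_cast; ring,
    zpow_add₀ two_ne_zero]
  ring

theorem sum_mul_riemannZeta_mul_riemannZeta (s : Finset ℕ) (c : ℕ → ℚ) {n : ℕ}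
    (hs : ∀ j ∈ s, j ≤ n) :
    ∑ j ∈ s, (c j : ℂ) * riemannZeta ((2 * j : ℕ) : ℂ) * riemannZeta ((2 * (n - j) : ℕ) : ℂ)
      = ((∑ j ∈ s, c j * (zetaRat j * zetaRat (n - j)) : ℚ) : ℂ) * (Real.pi : ℂ) ^ (2 * n) := by
  rw [Rat.cast_sum, sum_mul]
  refine sum_congr rfl fun j hj => ?_
  rw [riemannZeta_two_mul_nat_eq_zetaRat, riemannZeta_two_mul_nat_eq_zetaRat,
    show 2 * n = 2 * j + 2 * (n - j) by have := hs j hj; omega, pow_add]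
  push_cast
  ring

noncomputable def zetaSeries : ℚ⟦X⟧ := mk zetaRat

theorem eulerOp_zetaSeries :
    θ zetaSeries = zetaSeries ^ 2 + C (1 / 2) * zetaSeries + C (1 / 4) * X := by
  ext n
  rw [coeff_eulerOp, map_add, map_add, sq, coeff_mul, coeff_C_mul, coeff_C_mul, coeff_X]
  simp only [zetaSeries, coeff_mk]
  rw [sum_congr rfl fun p hp => by
      rw [zetaRat_mul_zetaRat, HasAntidiagonal.mem_antidiagonal.1 hp],
    ← mul_sum, sum_antidiagonal_bernoulli_two_mul]
  split_ifs with h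
  · subst h; norm_num [zetaRat, bernoulli_two]
  · rw [zetaRat, show (2 * n - 1 : ℤ) = 1 + (2 * n - 2) by ring, zpow_add₀ two_ne_zero]
    ring

noncomputable def zetaTail : ℚ⟦X⟧ := mk fun m => if m = 0 then 0 else zetaRat m

local notation "G" => zetaTail

theorem coeff_zetaTail (m : ℕ) : coeff m G = if m = 0 then 0 else zetaRat m := coeff_mk _ _

theorem zetaTail_eq : G = zetaSeries + C (1 / 2) := by
  ext (_ | m)
  · norm_num [coeff_zetaTail, zetaSeries, zetaRat]
  · simp [coeff_zetaTail, zetaSeries]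

theorem eulerOp_zetaTail : θ G = G ^ 2 - C (1 / 2) * G + C (1 / 4) * X := by
  rw [zetaTail_eq, map_add, eulerOp_C, eulerOp_zetaSeries]
  ring

theorem eulerOp_zetaTail_pow (j : ℕ) :
    θ (G ^ (j + 1))
      = (j + 1) • (G ^ (j + 2) - C (1 / 2) * G ^ (j + 1) + C (1 / 4) * X * G ^ j) := by
  rw [Derivation.leibniz_pow, Nat.add_sub_cancel, eulerOp_zetaTail, smul_eq_mul]
  ring

/-- Polynomials in `X` and `G` of weight at most `w`, where `X` has weight 2 and `G` weight 1. -/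
noncomputable def weightSpan (w : ℕ) : Submodule ℚ ℚ⟦X⟧ :=
  Submodule.span ℚ {f | ∃ m j, 2 * m + j ≤ w ∧ f = X ^ m * G ^ j}

/-- The weight of `X ^ c * θ^[i] G` is `2 * c + i + 1`. -/
noncomputable def reducedSpan (w : ℕ) : Submodule ℚ ℚ⟦X⟧ :=
  Submodule.span ℚ
    ({f | ∃ c i, 2 * c + i + 1 ≤ w ∧ f = X ^ c * θ^[i] G} ∪ {f | ∃ m, 2 * m ≤ w ∧ f = X ^ m})

theorem X_pow_mul_mem_weightSpan {m j w : ℕ} (h : 2 * m + j ≤ w) :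
    X ^ m * G ^ j ∈ weightSpan w :=
  Submodule.subset_span ⟨m, j, h, rfl⟩

theorem X_pow_mul_iterate_mem_reducedSpan {c i w : ℕ} (h : 2 * c + i + 1 ≤ w) :
    X ^ c * θ^[i] G ∈ reducedSpan w :=
  Submodule.subset_span (Or.inl ⟨c, i, h, rfl⟩)

theorem X_pow_mem_reducedSpan {m w : ℕ} (h : 2 * m ≤ w) : X ^ m ∈ reducedSpan w :=
  Submodule.subset_span (Or.inr ⟨m, h, rfl⟩)

theorem reducedSpan_mono {v w : ℕ} (h : v ≤ w) : reducedSpan v ≤ reducedSpan w := by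
  refine Submodule.span_mono ?_
  rintro _ (⟨c, i, hc, rfl⟩ | ⟨m, hm, rfl⟩)
  exacts [Or.inl ⟨c, i, hc.trans h, rfl⟩, Or.inr ⟨m, hm.trans h, rfl⟩]

theorem X_pow_mul_mem_reducedSpan (m : ℕ) {w : ℕ} {f : ℚ⟦X⟧} (hf : f ∈ reducedSpan w) :
    X ^ m * f ∈ reducedSpan (w + 2 * m) := by
  suffices reducedSpan w ≤ (reducedSpan (w + 2 * m)).comap (LinearMap.mulLeft ℚ (X ^ m)) from
    this hf
  refine Submodule.span_le.2 ?_
  rintro _ (⟨c, i, h, rfl⟩ | ⟨k, h, rfl⟩) <;>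
    simp only [SetLike.mem_coe, Submodule.mem_comap, LinearMap.mulLeft_apply, ← mul_assoc,
      ← pow_add]
  exacts [X_pow_mul_iterate_mem_reducedSpan (by omega), X_pow_mem_reducedSpan (by omega)]

theorem eulerOp_mem_reducedSpan {w : ℕ} {f : ℚ⟦X⟧} (hf : f ∈ reducedSpan w) :
    θ f ∈ reducedSpan (w + 1) := by
  suffices reducedSpan w ≤ (reducedSpan (w + 1)).comap (eulerOp ℚ).toLinearMap from this hf
  refine Submodule.span_le.2 ?_
  rintro _ (⟨c, i, h, rfl⟩ | ⟨m, h, rfl⟩) <;>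
    simp only [SetLike.mem_coe, Submodule.mem_comap, Derivation.coeFn_coe]
  · rw [Derivation.leibniz, eulerOp_X_pow, smul_comm, smul_eq_mul, smul_eq_mul,
      mul_comm (θ^[i] G), ← Function.iterate_succ_apply' θ]
    exact add_mem (X_pow_mul_iterate_mem_reducedSpan (by omega))
      (Submodule.smul_of_tower_mem _ _ (X_pow_mul_iterate_mem_reducedSpan (by omega)))
  · rw [eulerOp_X_pow]
    exact Submodule.smul_of_tower_mem _ _ (X_pow_mem_reducedSpan (by omega))

theorem zetaTail_pow_mem_reducedSpan (j : ℕ) : G ^ j ∈ reducedSpan j := by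
  induction j using Nat.twoStepInduction with
  | zero => simpa using X_pow_mem_reducedSpan (m := 0) le_rfl
  | one => simpa using X_pow_mul_iterate_mem_reducedSpan (c := 0) (i := 0) le_rfl
  | more j hj hj1 =>
    have h : G ^ (j + 2) = C (1 / (j + 1 : ℚ)) * θ (G ^ (j + 1)) + C (1 / 2) * G ^ (j + 1)
        - C (1 / 4) * (X * G ^ j) := by
      have hθ := eulerOp_zetaTail_pow j
      have hinv : C (1 / (j + 1 : ℚ)) * (j + 1 : ℚ⟦X⟧) = 1 := by
        rw [← map_natCast C, ← map_one C, ← map_add, ← map_mul,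
          div_mul_cancel₀ _ (by positivity)]
      rw [nsmul_eq_mul, Nat.cast_succ] at hθ
      linear_combination (-C (1 / (j + 1 : ℚ))) * hθ
        - (G ^ (j + 2) - C (1 / 2) * G ^ (j + 1) + C (1 / 4) * X * G ^ j) * hinv
    rw [h]
    refine sub_mem (add_mem (C_mul_mem _ (eulerOp_mem_reducedSpan hj1))
      (C_mul_mem _ (reducedSpan_mono (by omega) hj1))) (C_mul_mem _ ?_)
    simpa [pow_one] using X_pow_mul_mem_reducedSpan 1 hj

theorem weightSpan_le_reducedSpan (w : ℕ) : weightSpan w ≤ reducedSpan w := by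
  refine Submodule.span_le.2 ?_
  rintro _ ⟨m, j, h, rfl⟩
  exact reducedSpan_mono (by omega)
    (X_pow_mul_mem_reducedSpan m (zetaTail_pow_mem_reducedSpan j))

theorem weightSpan_mul_le (a b : ℕ) : weightSpan a * weightSpan b ≤ weightSpan (a + b) := by
  rw [weightSpan, weightSpan, Submodule.span_mul_span]
  refine Submodule.span_le.2 ?_
  rintro _ ⟨_, ⟨m, j, h, rfl⟩, _, ⟨m', j', h', rfl⟩, rfl⟩
  rw [SetLike.mem_coe]
  beta_reduce
  rw [show X ^ m * G ^ j * (X ^ m' * G ^ j') = X ^ (m + m') * G ^ (j + j') by ring]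
  exact X_pow_mul_mem_weightSpan (by omega)

theorem eulerOp_mem_weightSpan {w : ℕ} {f : ℚ⟦X⟧} (hf : f ∈ weightSpan w) :
    θ f ∈ weightSpan (w + 1) := by
  suffices weightSpan w ≤ (weightSpan (w + 1)).comap (eulerOp ℚ).toLinearMap from this hf
  refine Submodule.span_le.2 ?_
  rintro _ ⟨m, j, h, rfl⟩
  simp only [SetLike.mem_coe, Submodule.mem_comap, Derivation.coeFn_coe]
  rw [Derivation.leibniz, eulerOp_X_pow, smul_comm, smul_eq_mul, smul_eq_mul, mul_comm (G ^ j)]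
  refine add_mem ?_ (Submodule.smul_of_tower_mem _ _ (X_pow_mul_mem_weightSpan (by omega)))
  rcases j with _ | j
  · simp
  · rw [eulerOp_zetaTail_pow, mul_smul_comm]
    refine Submodule.smul_of_tower_mem _ _ ?_
    rw [show X ^ m * (G ^ (j + 2) - C (1 / 2) * G ^ (j + 1) + C (1 / 4) * X * G ^ j)
        = X ^ m * G ^ (j + 2) - C (1 / 2) * (X ^ m * G ^ (j + 1))
          + C (1 / 4) * (X ^ (m + 1) * G ^ j) by ring]
    exact add_mem (sub_mem (X_pow_mul_mem_weightSpan (by omega))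
      (C_mul_mem _ (X_pow_mul_mem_weightSpan (by omega))))
      (C_mul_mem _ (X_pow_mul_mem_weightSpan (by omega)))

theorem iterate_eulerOp_zetaTail_mem_weightSpan (i : ℕ) : θ^[i] G ∈ weightSpan (i + 1) := by
  induction i with
  | zero => simpa using X_pow_mul_mem_weightSpan (m := 0) (j := 1) le_rfl
  | succ i ih => exact Function.iterate_succ_apply' θ i G ▸ eulerOp_mem_weightSpan ih

theorem iterate_eulerOp_zetaTail_mul_mem_reducedSpan (a b : ℕ) :
    θ^[a] G * θ^[b] G ∈ reducedSpan (a + 1 + (b + 1)) :=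
  weightSpan_le_reducedSpan _ <| weightSpan_mul_le _ _ <| Submodule.mul_mem_mul
    (iterate_eulerOp_zetaTail_mem_weightSpan a) (iterate_eulerOp_zetaTail_mem_weightSpan b)

theorem eulerOpProd_mem_reducedSpan {d : ℕ} {F : MvPolynomial (Fin 2) ℚ}
    (hF : F.totalDegree ≤ d) :
    eulerOpProd F G G ∈ reducedSpan (d + 2) := by
  refine Submodule.sum_mem _ fun m hm => Submodule.smul_mem _ _ ?_
  have hdeg : m 0 + m 1 ≤ d := by
    have := MvPolynomial.le_totalDegree hm
    rw [Finsupp.sum_fintype _ _ fun _ => rfl, Fin.sum_univ_two] at this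
    omega
  exact reducedSpan_mono (by omega) (iterate_eulerOp_zetaTail_mul_mem_reducedSpan (m 0) (m 1))

/-- Series whose `n`-th coefficient is `∑_{k ≤ d / 2} K_k(n) ζ(2k) ζ(2n - 2k) / π ^ (2n)` for
`n > d`, for some polynomials `K_k` of degree at most `d`. -/
noncomputable def zetaProductSpan (d : ℕ) : Submodule ℚ ℚ⟦X⟧ where
  carrier := {f | ∃ K : ℕ → Polynomial ℚ, (∀ k, (K k).natDegree ≤ d) ∧ ∀ n, d + 1 ≤ n →
    coeff n f = ∑ k ∈ range (d / 2 + 1), (K k).eval (n : ℚ) * (zetaRat k * zetaRat (n - k))}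
  add_mem' := by
    rintro f g ⟨K, hK, hf⟩ ⟨L, hL, hg⟩
    refine ⟨K + L, fun k => Polynomial.natDegree_add_le_of_degree_le (hK k) (hL k),
      fun n hn => ?_⟩
    simp only [map_add, hf n hn, hg n hn, Pi.add_apply, Polynomial.eval_add, add_mul,
      sum_add_distrib]
  zero_mem' := ⟨0, fun _ => by simp, fun _ _ => by simp⟩
  smul_mem' := by
    rintro a f ⟨K, hK, hf⟩
    refine ⟨a • K, fun k => (Polynomial.natDegree_smul_le _ _).trans (hK k), fun n hn => ?_⟩
    simp only [coeff_smul, hf n hn, smul_eq_mul, mul_sum, Pi.smul_apply, Polynomial.eval_smul,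
      mul_assoc]

theorem coeff_X_pow_mul_iterate_eulerOp_zetaTail {c n : ℕ} (h : c < n) (i : ℕ) :
    coeff n (X ^ c * θ^[i] G) = ((n - c : ℕ) : ℚ) ^ i * zetaRat (n - c) := by
  rw [coeff_X_pow_mul', if_pos h.le, coeff_iterate_eulerOp, coeff_zetaTail, if_neg (by omega)]

theorem reducedSpan_le_zetaProductSpan (d : ℕ) : reducedSpan (d + 1) ≤ zetaProductSpan d := by
  refine Submodule.span_le.2 ?_
  rintro _ (⟨c, i, h, rfl⟩ | ⟨m, h, rfl⟩)
  · refine ⟨Pi.single c ((zetaRat c)⁻¹ • (Polynomial.X - Polynomial.C (c : ℚ)) ^ i),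
      fun k => ?_, fun n hn => ?_⟩
    · rcases eq_or_ne k c with rfl | hk
      · rw [Pi.single_eq_same]
        refine (Polynomial.natDegree_smul_le _ _).trans
          ((Polynomial.natDegree_pow_le_of_le _ (Polynomial.natDegree_X_sub_C_le _)).trans ?_)
        omega
      · simp [hk]
    · rw [coeff_X_pow_mul_iterate_eulerOp_zetaTail (by omega), sum_eq_single_of_mem c
        (mem_range.2 (by omega)) fun k _ hk => by simp [hk]]
      simp only [Pi.single_eq_same, Polynomial.eval_smul, Polynomial.eval_pow, Polynomial.eval_sub,
        Polynomial.eval_X, Polynomial.eval_C, smul_eq_mul, Nat.cast_sub (show c ≤ n by omega)]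
      field_simp [zetaRat_ne_zero c]
  · exact ⟨0, fun _ => by simp, fun n hn => by rw [coeff_X_pow, if_neg (by omega)]; simp⟩

theorem coeff_eulerOpProd_zetaTail (F : MvPolynomial (Fin 2) ℚ) (n : ℕ) :
    coeff n (eulerOpProd F G G) = ∑ j ∈ Icc 1 (n - 1),
      MvPolynomial.eval ![(j : ℚ), ((n - j : ℕ) : ℚ)] F * (zetaRat j * zetaRat (n - j)) := by
  rw [coeff_eulerOpProd, sum_antidiagonal_eq_sum_Icc
    (fun a b => MvPolynomial.eval ![(a : ℚ), (b : ℚ)] F * (coeff a G * coeff b G))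
    (by simp [coeff_zetaTail]) (by simp [coeff_zetaTail])]
  refine sum_congr rfl fun j hj => ?_
  rw [mem_Icc] at hj
  rw [coeff_zetaTail, coeff_zetaTail, if_neg (by omega), if_neg (by omega)]

end ZetaProductSums

open ZetaProductSums in
theorem weighted_sum_prod_two_zeta_poly_coeff (d : ℕ) (F : MvPolynomial (Fin 2) ℚ)
    (hF : F.totalDegree = d) :
    ∃ K : ℕ → Polynomial ℚ,
      (∀ k, (K k).natDegree ≤ d + 1) ∧
      ∀ n : ℕ, d + 2 ≤ n →
        ∑ j ∈ Finset.Icc 1 (n - 1),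
            ((MvPolynomial.eval ![(j : ℚ), ((n - j : ℕ) : ℚ)] F : ℚ) : ℂ)
              * riemannZeta ((2 * j : ℕ) : ℂ) * riemannZeta ((2 * (n - j) : ℕ) : ℂ)
          = ∑ k ∈ Finset.range ((d + 1) / 2 + 1),
              (((K k).eval (n : ℚ) : ℚ) : ℂ)
                * riemannZeta ((2 * k : ℕ) : ℂ) * riemannZeta ((2 * n - 2 * k : ℕ) : ℂ) := by
  obtain ⟨K, hK, hcoeff⟩ :=
    reducedSpan_le_zetaProductSpan (d + 1) (eulerOpProd_mem_reducedSpan hF.le)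
  refine ⟨K, hK, fun n hn => ?_⟩
  simp_rw [← Nat.mul_sub]
  rw [sum_mul_riemannZeta_mul_riemannZeta _ _ fun j hj => by rw [mem_Icc] at hj; omega,
    sum_mul_riemannZeta_mul_riemannZeta _ _ fun k hk => by rw [mem_range] at hk; omega,
    ← coeff_eulerOpProd_zetaTail, hcoeff n hn]
end

section
/- Let r be a nonnegative integer and n an integer with n ≥ 2r + 1. Then C(2n-1, 2r+1) - 2 * ∑_{k=r+1}^{n-r-1} C(2k-1, r) * C(2n-2k-1, r) = (-1)^r * C(n-1, r) + 4 * ∑_{k=1}^{r} C(2k-1, r) * C(2n-2k-1, r), as an identity of integers. -/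
/-!
With `h j = C(j, r) C(2N - j, r)`, the plain sum `∑_{j ≤ 2N} h j` is `C(2N + 1, 2r + 1)` (upper
Vandermonde) and the alternating sum `∑_{j ≤ 2N} (-1)^j h j` is `(-1)^r C(N, r)` (the generating
function is `(-1)^r x^{2r} / (1 - x^2)^{r+1}`; here both follow from Pascal's rule by induction).
Their difference is twice the sum of `h` over odd `j = 2k - 1`, which is the sum over `k ∈ [1, N]`
in the statement (`n = N + 1`). That summand is invariant under `k ↦ N + 1 - k`, so its first `r`
and last `r` terms contribute equally.
-/

open Finset

theorem Finset.sum_range_two_mul {M : Type*} [AddCommMonoid M] (f : ℕ → M) (n : ℕ) :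
    ∑ j ∈ range (2 * n), f j = ∑ k ∈ range n, (f (2 * k) + f (2 * k + 1)) := by
  induction n with
  | zero => simp
  | succ n ih =>
    rw [show 2 * (n + 1) = 2 * n + 1 + 1 by ring, sum_range_succ, sum_range_succ, ih,
      sum_range_succ, add_assoc]

theorem Finset.sum_Icc_one_eq_of_palindromic {M : Type*} [AddCommMonoid M] (f : ℕ → M)
    {r N : ℕ} (hrN : 2 * r ≤ N) (hf : ∀ k ∈ Icc 1 r, f (N + 1 - k) = f k) :
    ∑ k ∈ Icc 1 N, f k
      = ∑ k ∈ Icc 1 r, f k + ∑ k ∈ Icc (r + 1) (N - r), f k + ∑ k ∈ Icc 1 r, f k := by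
  have htail : ∑ k ∈ Icc (N - r + 1) N, f k = ∑ k ∈ Icc 1 r, f k := by
    refine sum_nbij' (N + 1 - ·) (N + 1 - ·) ?_ ?_ ?_ ?_ ?_ <;> intro k hk <;>
      simp only [mem_Icc] at hk ⊢
    · omega
    · omega
    · omega
    · omega
    · rw [← hf (N + 1 - k) (mem_Icc.mpr (by omega)), Nat.sub_sub_self (by omega)]
  have hsplit : ∑ k ∈ Icc 1 N, f k = ∑ k ∈ Icc 1 r, f k + ∑ k ∈ Icc (r + 1) (N - r), f k
      + ∑ k ∈ Icc (N - r + 1) N, f k := by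
    have hIcc : ∀ m : ℕ, Icc 1 m = Ioc 0 m := Icc_add_one_left_eq_Ioc 0
    rw [Icc_add_one_left_eq_Ioc, Icc_add_one_left_eq_Ioc, hIcc, hIcc,
      sum_Ioc_consecutive _ (Nat.zero_le r) (by omega),
      sum_Ioc_consecutive _ (Nat.zero_le _) (Nat.sub_le N r)]
  rw [hsplit, htail]

def chooseConv (ε : ℤ) (r s m : ℕ) : ℤ :=
  ∑ j ∈ range (m + 1), ε ^ j * ((j.choose r : ℤ) * ((m - j).choose s : ℤ))

namespace chooseConv

theorem succ_zero_right (ε : ℤ) (r m : ℕ) :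
    chooseConv ε r 0 (m + 1) = chooseConv ε r 0 m + ε ^ (m + 1) * ((m + 1).choose r : ℤ) := by
  simp only [chooseConv, Nat.choose_zero_right, Nat.cast_one, mul_one]
  exact sum_range_succ _ _

theorem succ_succ_right (ε : ℤ) (r s m : ℕ) :
    chooseConv ε r (s + 1) (m + 1) = chooseConv ε r (s + 1) m + chooseConv ε r s m := by
  rw [chooseConv, sum_range_succ, Nat.sub_self, Nat.choose_zero_succ, Nat.cast_zero, mul_zero,
    mul_zero, add_zero, chooseConv, chooseConv, ← sum_add_distrib]
  refine sum_congr rfl fun j hj => ?_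
  rw [Nat.sub_add_comm (mem_range_succ_iff.mp hj), Nat.choose_succ_succ']
  push_cast
  ring

theorem neg_one_succ_succ_left (r s m : ℕ) :
    chooseConv (-1) (r + 1) s (m + 1) = -chooseConv (-1) (r + 1) s m - chooseConv (-1) r s m := by
  rw [chooseConv, sum_range_succ', chooseConv, chooseConv, ← sum_neg_distrib, ← sum_sub_distrib]
  simp only [Nat.choose_zero_succ, Nat.cast_zero, zero_mul, mul_zero, add_zero,
    Nat.add_sub_add_right, Nat.choose_succ_succ', Nat.cast_add, pow_succ]
  refine sum_congr rfl fun j _ => ?_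
  ring

theorem one_eq_choose (r s m : ℕ) : chooseConv 1 r s m = (m + 1).choose (r + s + 1) := by
  induction m generalizing s with
  | zero => cases r <;> cases s <;> simp [chooseConv, Nat.choose_eq_zero_of_lt]
  | succ m ih =>
    cases s with
    | zero =>
      rw [succ_zero_right, ih, one_pow, one_mul, add_zero, Nat.choose_succ_succ' (m + 1) r]
      push_cast
      ring
    | succ s =>
      rw [succ_succ_right, ih, ih, show r + (s + 1) + 1 = r + s + 1 + 1 by ring,
        Nat.choose_succ_succ' (m + 1)]
      push_cast
      ring

theorem neg_one_comm (r s m : ℕ) :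
    chooseConv (-1) r s m = (-1) ^ m * chooseConv (-1) s r m := by
  rw [chooseConv, chooseConv, mul_sum, ← sum_range_reflect]
  refine sum_congr rfl fun j hj => ?_
  obtain ⟨i, rfl⟩ := Nat.exists_eq_add_of_le (mem_range_succ_iff.mp hj)
  simp only [Nat.add_sub_cancel_left, add_tsub_cancel_right, pow_add]
  rcases neg_one_pow_eq_or ℤ j with h | h <;> rw [h] <;> ring

theorem neg_one_odd_self (r p : ℕ) : chooseConv (-1) r r (2 * p + 1) = 0 := by
  have h := neg_one_comm r r (2 * p + 1)
  rw [Odd.neg_one_pow ⟨p, rfl⟩] at h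
  linarith

theorem neg_one_even_self (r p : ℕ) :
    chooseConv (-1) r r (2 * p) = (-1) ^ r * p.choose r := by
  induction p generalizing r with
  | zero => cases r <;> simp [chooseConv]
  | succ p ih =>
    cases r with
    | zero =>
      rw [show 2 * (p + 1) = 2 * p + 1 + 1 by ring, succ_zero_right, neg_one_odd_self,
        Even.neg_one_pow ⟨p + 1, by ring⟩]
      simp
    | succ r =>
      -- Pascal's rule in each index, with the odd case vanishing, expresses the value at
      -- `(r + 1, p + 1)` through those at `(r, p)` and `(r + 1, p)`.
      have h₁ := succ_succ_right (-1) (r + 1) r (2 * p + 1)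
      have h₂ := succ_succ_right (-1) (r + 1) r (2 * p)
      have h₃ := neg_one_succ_succ_left r r (2 * p)
      rw [neg_one_odd_self] at h₁ h₂
      rw [show 2 * (p + 1) = 2 * p + 1 + 1 by ring, h₁, h₃, ih r, Nat.choose_succ_succ']
      push_cast
      linear_combination h₂ + ih (r + 1)

theorem one_sub_neg_one_two_mul (r s n : ℕ) :
    chooseConv 1 r s (2 * n) - chooseConv (-1) r s (2 * n)
      = 2 * ∑ k ∈ range n,
          ((2 * k + 1).choose r : ℤ) * ((2 * n - (2 * k + 1)).choose s : ℤ) := by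
  rw [chooseConv, chooseConv, ← sum_sub_distrib, sum_range_succ, sum_range_two_mul, mul_sum]
  simp only [one_pow, Even.neg_one_pow (even_two_mul _), Odd.neg_one_pow (odd_two_mul_add_one _)]
  rw [sub_self, add_zero]
  exact sum_congr rfl fun k _ => by ring

end chooseConv

theorem phi_r_identity (r n : ℕ) (hn : 2 * r + 1 ≤ n) :
    ((2 * n - 1).choose (2 * r + 1) : ℤ)
        - 2 * ∑ k ∈ Finset.Icc (r + 1) (n - r - 1),
            ((2 * k - 1).choose r : ℤ) * ((2 * n - 2 * k - 1).choose r : ℤ)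
      = (-1 : ℤ) ^ r * ((n - 1).choose r : ℤ)
        + 4 * ∑ k ∈ Finset.Icc 1 r,
            ((2 * k - 1).choose r : ℤ) * ((2 * n - 2 * k - 1).choose r : ℤ) := by
  obtain ⟨N, rfl⟩ : ∃ N, n = N + 1 := ⟨n - 1, by omega⟩
  set t : ℕ → ℤ :=
    fun k => ((2 * k - 1).choose r : ℤ) * ((2 * (N + 1) - 2 * k - 1).choose r : ℤ)
  have hodd : ((2 * N + 1).choose (2 * r + 1) : ℤ) - (-1) ^ r * N.choose r
      = 2 * ∑ k ∈ Icc 1 N, t k := by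
    rw [two_mul r, ← chooseConv.one_eq_choose, ← chooseConv.neg_one_even_self,
      chooseConv.one_sub_neg_one_two_mul, ← Ico_add_one_right_eq_Icc, sum_Ico_eq_sum_range]
    refine congrArg (2 * ·) (sum_congr (by simp) fun k hk => ?_)
    simp only [t]
    congr 3 <;> omega
  have hpal : ∀ k ∈ Icc 1 r, t (N + 1 - k) = t k := by
    intro k hk
    simp only [t, mem_Icc] at hk ⊢
    rw [mul_comm]
    congr 3 <;> omega
  rw [sum_Icc_one_eq_of_palindromic t (by omega) hpal] at hodd
  rw [show 2 * (N + 1) - 1 = 2 * N + 1 by omega, show N + 1 - 1 = N by omega,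
    show N + 1 - r - 1 = N - r by omega]
  linear_combination hodd
end

section
/- For all nonnegative integers r and n, one has ∑_{k=0}^{2n} (-1)^k * C(k, r) * C(2n-k, r) = (-1)^r * C(n, r), as an identity of integers. -/
/-!
With `G(X) = ∑ C(k, r) Xᵏ = Xʳ / (1 - X)ʳ⁺¹` the sum is the coefficient of `X²ⁿ` in
`G(-X) G(X) = (-1)ʳ X²ʳ / (1 - X²)ʳ⁺¹`, i.e. in `(-1)ʳ X²ʳ ∑ C(r + j, r) X²ʲ`,
which is `(-1)ʳ C(n, r)`.
-/

namespace PowerSeries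

variable {R : Type*} [CommRing R]

theorem mk_choose_eq_X_pow_mul (r : ℕ) :
    (mk fun k ↦ (k.choose r : R)) = X ^ r * mk fun k ↦ ((r + k).choose r : R) := by
  ext m
  rw [coeff_mk, coeff_X_pow_mul']
  split_ifs with h
  · rw [coeff_mk, Nat.add_sub_cancel' h]
  · rw [Nat.choose_eq_zero_of_lt (not_le.mp h), Nat.cast_zero]

theorem mk_choose_mul_one_sub_pow (r : ℕ) :
    (mk fun k ↦ (k.choose r : R)) * (1 - X) ^ (r + 1) = X ^ r := by
  rw [mk_choose_eq_X_pow_mul, mul_assoc, mk_add_choose_mul_one_sub_pow_eq_one, mul_one]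

theorem mk_neg_one_pow_mul_choose_mul_one_add_pow (r : ℕ) :
    (mk fun k ↦ (-1) ^ k * (k.choose r : R)) * (1 + X) ^ (r + 1) = (-1) ^ r * X ^ r := by
  have h := congrArg (rescale (-1 : R)) (mk_choose_mul_one_sub_pow r)
  rwa [map_mul, map_pow, map_sub, map_one, map_pow, rescale_mk, rescale_neg_one_X,
    sub_neg_eq_add, neg_pow] at h

theorem expand_two_mk_add_choose_mul_one_sub_X_sq_pow (r : ℕ) :
    expand 2 two_ne_zero (mk fun k ↦ ((r + k).choose r : R)) * (1 - X ^ 2) ^ (r + 1) = 1 := by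
  have h := congrArg (expand 2 two_ne_zero) (mk_add_choose_mul_one_sub_pow_eq_one R r)
  rwa [map_mul, map_pow, map_sub, map_one, expand_X] at h

theorem mk_neg_one_pow_mul_choose_mul_mk_choose (r : ℕ) :
    (mk fun k ↦ (-1) ^ k * (k.choose r : R)) * (mk fun k ↦ (k.choose r : R)) =
      (-1) ^ r * X ^ (2 * r) * expand 2 two_ne_zero (mk fun k ↦ ((r + k).choose r : R)) := by
  have hunit : IsUnit ((1 - X ^ 2 : R⟦X⟧) ^ (r + 1)) :=
    IsUnit.of_mul_eq_one_right _ (expand_two_mk_add_choose_mul_one_sub_X_sq_pow r)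
  rw [← hunit.mul_left_inj, mul_assoc _ (expand _ _ _),
    expand_two_mk_add_choose_mul_one_sub_X_sq_pow, mul_one]
  calc (mk fun k ↦ (-1) ^ k * (k.choose r : R)) * (mk fun k ↦ (k.choose r : R)) *
        (1 - X ^ 2) ^ (r + 1)
      = ((mk fun k ↦ (-1) ^ k * (k.choose r : R)) * (1 + X) ^ (r + 1)) *
          ((mk fun k ↦ (k.choose r : R)) * (1 - X) ^ (r + 1)) := by
        rw [show (1 - X ^ 2 : R⟦X⟧) = (1 + X) * (1 - X) by ring, mul_pow]
        ring
    _ = (-1) ^ r * X ^ (2 * r) := by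
      rw [mk_neg_one_pow_mul_choose_mul_one_add_pow, mk_choose_mul_one_sub_pow, mul_assoc,
        ← pow_add, two_mul]

theorem coeff_two_mul_X_pow_two_mul_mul_expand_two_mk_add_choose (r n : ℕ) :
    coeff (2 * n) (X ^ (2 * r) * expand 2 two_ne_zero (mk fun k ↦ ((r + k).choose r : R))) =
      (n.choose r : R) := by
  rw [coeff_X_pow_mul']
  split_ifs with h
  · rw [← Nat.mul_sub, coeff_expand_mul, coeff_mk, Nat.add_sub_cancel' (by omega)]
  · rw [Nat.choose_eq_zero_of_lt (by omega), Nat.cast_zero]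

end PowerSeries

open PowerSeries

theorem alternating_choose_sum_identity (r n : ℕ) :
    ∑ k ∈ Finset.range (2 * n + 1),
        (-1 : ℤ) ^ k * (k.choose r : ℤ) * ((2 * n - k).choose r : ℤ)
      = (-1 : ℤ) ^ r * (n.choose r : ℤ) := by
  calc ∑ k ∈ Finset.range (2 * n + 1),
        (-1 : ℤ) ^ k * (k.choose r : ℤ) * ((2 * n - k).choose r : ℤ)
      = coeff (2 * n)
          ((mk fun k ↦ (-1) ^ k * (k.choose r : ℤ)) * (mk fun k ↦ (k.choose r : ℤ))) := by
        rw [coeff_mul, Finset.Nat.sum_antidiagonal_eq_sum_range_succ_mk]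
        simp only [coeff_mk]
    _ = (-1) ^ r * n.choose r := by
        rw [mk_neg_one_pow_mul_choose_mul_mk_choose, mul_assoc,
          show (-1 : ℤ⟦X⟧) ^ r = C ((-1) ^ r) by simp, coeff_C_mul,
          coeff_two_mul_X_pow_two_mul_mul_expand_two_mk_add_choose]
end
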